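/- arXiv:2208.11897 — 8 statements merged into one kernel-verified Lean document; each statement's English description precedes it below -/
import Mathlib

section
/- Let V, g, φ, ξ, η, A, D be as in the context, and suppose Aξ = αξ + βU for some real numbers α, β with β ≠ 0 and some unit vector U ∈ D (the non-Hopf case). If A_F is η-pure with respect to φ, i.e. A_F(φX, Y) = A_F(X, φY) for all X, Y ∈ D, then AU = βξ, A(φU) = 0, and AZ = 0 for every Z ∈ D orthogonal to both U and φU; in particular g(AX, Y) = 0 for all X, Y ∈ D (the pointwise ruled condition). (Theorem 1, non-Hopf case.) -/
open scoped InnerProductSpace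

/-- The Cho operator `F_X` for `X` in the maximal holomorphic distribution `D`
(for such `X` the `k`-th Cho operator `F^{(k)}_X Y = g(φ(AX),Y)ξ − η(Y)φ(AX) − k·η(X)·φY`
does not depend on `k`): `F_X Y = g(φ(AX), Y)·ξ − η(Y)·φ(AX)`. -/
noncomputable def choF {V : Type*} [NormedAddCommGroup V] [InnerProductSpace ℝ V]
    (φ A : V →ₗ[ℝ] V) (ξ : V) (X Y : V) : V :=
  ⟪φ (A X), Y⟫_ℝ • ξ - ⟪Y, ξ⟫_ℝ • φ (A X)

/-- `A_F(X, Y) = F_X (A Y) − A (F_X Y)` for `X ∈ D`. -/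
noncomputable def AF {V : Type*} [NormedAddCommGroup V] [InnerProductSpace ℝ V]
    (φ A : V →ₗ[ℝ] V) (ξ : V) (X Y : V) : V :=
  choF φ A ξ X (A Y) - A (choF φ A ξ X Y)

theorem thm1_nonHopf {V : Type*} [NormedAddCommGroup V] [InnerProductSpace ℝ V]
    [FiniteDimensional ℝ V] (hdim : 5 ≤ Module.finrank ℝ V)
    (φ : V →ₗ[ℝ] V) (ξ : V) (hξ : ‖ξ‖ = 1)
    (hφφ : ∀ X : V, φ (φ X) = -X + ⟪X, ξ⟫_ℝ • ξ)
    (hφg : ∀ X Y : V, ⟪φ X, φ Y⟫_ℝ = ⟪X, Y⟫_ℝ - ⟪X, ξ⟫_ℝ * ⟪Y, ξ⟫_ℝ)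
    (A : V →ₗ[ℝ] V) (hA : ∀ X Y : V, ⟪A X, Y⟫_ℝ = ⟪X, A Y⟫_ℝ)
    (α β : ℝ) (hβ : β ≠ 0) (U : V) (hU : ‖U‖ = 1) (hUξ : ⟪U, ξ⟫_ℝ = 0)
    (hAξ : A ξ = α • ξ + β • U)
    (hpure : ∀ X Y : V, ⟪X, ξ⟫_ℝ = 0 → ⟪Y, ξ⟫_ℝ = 0 →
      AF φ A ξ (φ X) Y = AF φ A ξ X (φ Y)) :
    A U = β • ξ ∧ A (φ U) = 0 ∧
      (∀ Z : V, ⟪Z, ξ⟫_ℝ = 0 → ⟪Z, U⟫_ℝ = 0 → ⟪Z, φ U⟫_ℝ = 0 → A Z = 0) ∧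
      (∀ X Y : V, ⟪X, ξ⟫_ℝ = 0 → ⟪Y, ξ⟫_ℝ = 0 → ⟪A X, Y⟫_ℝ = 0) := by
  have hξξ : ⟪ξ, ξ⟫_ℝ = 1 := by
    have h := real_inner_self_eq_norm_sq ξ
    rw [hξ] at h; simpa using h
  have hUU : ⟪U, U⟫_ℝ = 1 := by
    have h := real_inner_self_eq_norm_sq U
    rw [hU] at h; simpa using h
  have hφξ : φ ξ = 0 := by
    have h : ⟪φ ξ, φ ξ⟫_ℝ = 0 := by rw [hφg, hξξ]; ring
    exact inner_self_eq_zero.mp h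
  have hηφ : ∀ X : V, ⟪φ X, ξ⟫_ℝ = 0 := by
    intro X
    have h1 := hφg (φ X) (φ X)
    rw [hφφ X] at h1
    have h2 := hφg X X
    have h3 : ⟪-X + ⟪X, ξ⟫_ℝ • ξ, -X + ⟪X, ξ⟫_ℝ • ξ⟫_ℝ
        = ⟪X, X⟫_ℝ - ⟪X, ξ⟫_ℝ * ⟪X, ξ⟫_ℝ := by
      simp only [inner_add_left, inner_add_right, inner_neg_left, inner_neg_right,
        real_inner_smul_left, real_inner_smul_right, hξξ, real_inner_comm ξ X]
      ring
    rw [h3, h2] at h1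
    have h4 : ⟪φ X, ξ⟫_ℝ * ⟪φ X, ξ⟫_ℝ = 0 := by linarith
    exact mul_self_eq_zero.mp h4
  have hskew : ∀ X Y : V, ⟪φ X, Y⟫_ℝ = -⟪X, φ Y⟫_ℝ := by
    intro X Y
    have h := hφg X (φ Y)
    rw [hφφ Y, hηφ Y] at h
    rw [inner_add_right, inner_neg_right, real_inner_smul_right, hηφ X] at h
    simp at h
    linarith
  have hφU2 : φ (φ U) = -U := by rw [hφφ U, hUξ]; simp
  have hφUU : ⟪φ U, U⟫_ℝ = 0 := by
    have h := hskew U U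
    have h2 := real_inner_comm U (φ U)
    linarith
  have hUφU : ⟪U, φ U⟫_ℝ = 0 := by rw [real_inner_comm]; exact hφUU
  have hξU : ⟪ξ, U⟫_ℝ = 0 := by rw [real_inner_comm]; exact hUξ
  have hηA : ∀ Y : V, ⟪Y, ξ⟫_ℝ = 0 → ⟪A Y, ξ⟫_ℝ = β * ⟪Y, U⟫_ℝ := by
    intro Y hY
    rw [hA Y ξ, hAξ, inner_add_right, real_inner_smul_right, real_inner_smul_right, hY]
    ring
  have hAξξ : ⟪A ξ, ξ⟫_ℝ = α := by
    rw [hAξ, inner_add_left, real_inner_smul_left, real_inner_smul_left, hξξ, hUξ]; ring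
  have hAξU : ⟪A ξ, U⟫_ℝ = β := by
    rw [hAξ, inner_add_left, real_inner_smul_left, real_inner_smul_left, hUU, hξU]; ring
  have hAUξ : ⟪A U, ξ⟫_ℝ = β := by rw [hηA U hUξ, hUU]; ring
  have hAφUξ : ⟪A (φ U), ξ⟫_ℝ = 0 := by rw [hηA (φ U) (hηφ U), hφUU]; ring
  have hAF : ∀ X Y : V, AF φ A ξ X Y
      = ⟪φ (A X), A Y⟫_ℝ • ξ - ⟪A Y, ξ⟫_ℝ • φ (A X)
        - ⟪φ (A X), Y⟫_ℝ • A ξ + ⟪Y, ξ⟫_ℝ • A (φ (A X)) := by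
    intro X Y
    simp only [AF, choF, map_sub, map_smul]
    abel
  -- Key step: for X ∈ D, φ(A X) ∈ span {U}
  have hkey : ∀ X : V, ⟪X, ξ⟫_ℝ = 0 → φ (A X) = ⟪φ (A X), U⟫_ℝ • U := by
    intro X hX
    have hp := hpure X (φ U) hX (hηφ U)
    rw [hφU2] at hp
    rw [hAF, hAF] at hp
    simp only [map_neg, inner_neg_left, inner_neg_right, neg_neg, neg_smul, smul_neg,
      hAφUξ, hηφ, hUξ, hAUξ, zero_smul, smul_zero, sub_zero, add_zero, sub_neg_eq_add] at hp
    have h1 : β • φ (A X)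
        = (⟪φ (A (φ X)), A (φ U)⟫_ℝ + ⟪φ (A X), A U⟫_ℝ) • ξ
          - (⟪φ (A (φ X)), φ U⟫_ℝ + ⟪φ (A X), U⟫_ℝ) • A ξ := by
      linear_combination (norm := module) -hp
    have h2 := congrArg (fun v => ⟪v, ξ⟫_ℝ) h1
    simp only [real_inner_smul_left, inner_sub_left, inner_add_left, hξξ, hAξξ, hηφ,
      mul_zero, mul_one] at h2
    have h3 := congrArg (fun v => ⟪v, U⟫_ℝ) h1
    simp only [real_inner_smul_left, inner_sub_left, inner_add_left, hUU, hAξU, hξU,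
      mul_zero, mul_one, zero_sub] at h3
    show φ (A X) = ⟪φ (A X), U⟫_ℝ • U
    apply smul_right_injective V hβ
    show β • φ (A X) = β • (⟪φ (A X), U⟫_ℝ • U)
    rw [h1, hAξ]
    match_scalars
    · linarith
    · linarith
  have hAD : ∀ X : V, ⟪X, ξ⟫_ℝ = 0 →
      A X = (β * ⟪X, U⟫_ℝ) • ξ - ⟪φ (A X), U⟫_ℝ • φ U := by
    intro X hX
    have h := congrArg φ (hkey X hX)
    rw [hφφ (A X), map_smul, hηA X hX] at h
    linear_combination (norm := module) -h
  have hAφU : A (φ U) = -(⟪φ (A (φ U)), U⟫_ℝ • φ U) := by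
    have h := hAD (φ U) (hηφ U)
    rw [hφUU] at h
    simpa using h
  have hs : ∀ X : V, ⟪φ (A X), U⟫_ℝ = ⟪φ (A (φ U)), U⟫_ℝ * ⟪X, φ U⟫_ℝ := by
    intro X
    rw [hskew (A X) U, hA X (φ U)]
    conv_lhs => rw [hAφU]
    rw [inner_neg_right, real_inner_smul_right]
    ring
  have hAU : A U = β • ξ := by
    have h := hAD U hUξ
    rw [hs U, hUU, hUφU] at h
    simpa using h
  have hφAU : φ (A U) = 0 := by rw [hAU, map_smul, hφξ, smul_zero]
  have hφAφU : φ (A (φ U)) = ⟪φ (A (φ U)), U⟫_ℝ • U := by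
    conv_lhs => rw [hAφU]
    rw [map_neg, map_smul, hφU2]; simp
  have hc0 : ⟪φ (A (φ U)), U⟫_ℝ = 0 := by
    have hp := hpure U U hUξ hUξ
    rw [hAF, hAF, hφAφU, hφAU, hAU] at hp
    simp only [real_inner_smul_left, real_inner_smul_right, hUξ, hξξ, hUU, hξU,
      inner_zero_left, zero_smul, smul_zero, mul_zero, zero_mul, mul_one, sub_zero,
      zero_sub, add_zero, map_smul, map_zero, smul_smul] at hp
    have h2 := congrArg (fun v => ⟪v, U⟫_ℝ) hp
    simp only [inner_sub_left, inner_neg_left, real_inner_smul_left, hUU, hAξU, hξU,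
      inner_zero_left, mul_one, mul_zero] at h2
    have hcb : ⟪φ (A (φ U)), U⟫_ℝ * β = 0 := by nlinarith [h2]
    rcases mul_eq_zero.mp hcb with h | h
    · exact h
    · exact absurd h hβ
  refine ⟨hAU, ?_, ?_, ?_⟩
  · rw [hAφU, hc0]; simp
  · intro Z hZξ hZU hZφU
    rw [hAD Z hZξ, hs Z, hZU, hZφU]
    simp
  · intro X Y hX hY
    have hξY : ⟪ξ, Y⟫_ℝ = 0 := by rw [real_inner_comm]; exact hY
    rw [hAD X hX, hs X, hc0]
    simp [inner_sub_left, real_inner_smul_left, hξY]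
end

section
/- Let V, g, φ, ξ, η, A, D be as in the context, suppose Aξ = αξ for some real number α (the Hopf case) and that A satisfies the Maeda relations for α. Then A_F cannot be η-pure with respect to φ: it is impossible that A_F(φX, Y) = A_F(X, φY) for all X, Y ∈ D. (Theorem 1, Hopf case.) -/
open scoped InnerProductSpace

theorem thm1_hopf {V : Type*} [NormedAddCommGroup V] [InnerProductSpace ℝ V]
    [FiniteDimensional ℝ V] (hdim : 5 ≤ Module.finrank ℝ V)
    (φ : V →ₗ[ℝ] V) (ξ : V) (hξ : ‖ξ‖ = 1)
    (hφφ : ∀ X : V, φ (φ X) = -X + ⟪X, ξ⟫_ℝ • ξ)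
    (hφg : ∀ X Y : V, ⟪φ X, φ Y⟫_ℝ = ⟪X, Y⟫_ℝ - ⟪X, ξ⟫_ℝ * ⟪Y, ξ⟫_ℝ)
    (A : V →ₗ[ℝ] V) (hA : ∀ X Y : V, ⟪A X, Y⟫_ℝ = ⟪X, A Y⟫_ℝ)
    (α : ℝ) (hAξ : A ξ = α • ξ)
    (hMaeda : ∀ (X : V) (l : ℝ), ‖X‖ = 1 → ⟪X, ξ⟫_ℝ = 0 → A X = l • X →
      2 * l - α ≠ 0 ∧ A (φ X) = ((α * l + 2) / (2 * l - α)) • φ X) :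
    ¬ (∀ X Y : V, ⟪X, ξ⟫_ℝ = 0 → ⟪Y, ξ⟫_ℝ = 0 →
      AF φ A ξ (φ X) Y = AF φ A ξ X (φ Y)) := by
  intro hpure
  have hξ0 : ξ ≠ 0 := by intro h; rw [h, norm_zero] at hξ; norm_num at hξ
  have hξξ : ⟪ξ, ξ⟫_ℝ = 1 := by
    rw [real_inner_self_eq_norm_sq, hξ]; norm_num
  have hφξ : φ ξ = 0 := by
    have := hφg ξ ξ
    rw [hξξ] at this
    have h0 : ⟪φ ξ, φ ξ⟫_ℝ = 0 := by rw [this]; ring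
    exact inner_self_eq_zero.mp h0
  have hηφ : ∀ X : V, ⟪φ X, ξ⟫_ℝ = 0 := by
    intro X
    have h1 : φ (φ (φ X)) = -φ X + ⟪φ X, ξ⟫_ℝ • ξ := hφφ (φ X)
    have h2 : φ (φ (φ X)) = -φ X := by
      rw [show φ (φ (φ X)) = φ (φ (φ X)) from rfl]
      conv_lhs => rw [show φ (φ X) = -X + ⟪X, ξ⟫_ℝ • ξ from hφφ X]
      rw [map_add, map_neg, map_smul, hφξ, smul_zero, add_zero]
    rw [h2] at h1
    have h3 : ⟪φ X, ξ⟫_ℝ • ξ = 0 := (left_eq_add.mp h1)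
    exact (smul_eq_zero.mp h3).resolve_right hξ0
  -- eigenvector in D
  set K : Submodule ℝ V := (ℝ ∙ ξ)ᗮ with hK
  have hmapK : ∀ x ∈ K, A x ∈ K := by
    intro x hx
    rw [Submodule.mem_orthogonal_singleton_iff_inner_right] at hx ⊢
    rw [real_inner_comm, hA, hAξ, real_inner_smul_right, real_inner_comm, hx, mul_zero]
  have hKfin : 0 < Module.finrank ℝ K := by
    have h1 : Module.finrank ℝ (ℝ ∙ ξ) + Module.finrank ℝ K = Module.finrank ℝ V :=
      Submodule.finrank_add_finrank_orthogonal (ℝ ∙ ξ)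
    have h2 : Module.finrank ℝ (ℝ ∙ ξ) = 1 := finrank_span_singleton hξ0
    omega
  haveI : Nontrivial K := Module.nontrivial_of_finrank_pos hKfin
  set B : K →ₗ[ℝ] K := A.restrict hmapK with hB
  have hBsym : B.IsSymmetric := by
    intro x y
    have : ⟪(A x : V), (y : V)⟫_ℝ = ⟪(x : V), (A y : V)⟫_ℝ := hA x y
    simpa [hB, Submodule.coe_inner, LinearMap.restrict_apply] using this
  obtain ⟨x, hx⟩ := hBsym.hasEigenvalue_iSup_of_finiteDimensional.exists_hasEigenvector
  obtain ⟨μ, x, hx0, hBx⟩ : ∃ μ : ℝ, ∃ x : K, x ≠ 0 ∧ B x = μ • x :=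
    ⟨_, x, hx.2, hx.apply_eq_smul⟩
  have hxV0 : (x : V) ≠ 0 := fun h => hx0 (Subtype.coe_injective h)
  have hAx : A (x : V) = μ • (x : V) := by
    have := congrArg (Subtype.val) hBx
    simpa [hB, LinearMap.restrict_apply] using this
  set X : V := ‖(x : V)‖⁻¹ • (x : V) with hXdef
  have hXn : ‖X‖ = 1 := by
    rw [hXdef, norm_smul, norm_inv, norm_norm, inv_mul_cancel₀ (norm_ne_zero_iff.mpr hxV0)]
  have hXξ : ⟪X, ξ⟫_ℝ = 0 := by
    have hxK : ⟪ξ, (x : V)⟫_ℝ = 0 :=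
      Submodule.mem_orthogonal_singleton_iff_inner_right.mp x.2
    rw [hXdef, real_inner_smul_left, real_inner_comm, hxK, mul_zero]
  have hAX : A X = μ • X := by
    rw [hXdef, map_smul, hAx, smul_comm]
  obtain ⟨hne, hAφ⟩ := hMaeda X μ hXn hXξ hAX
  set ν : ℝ := (α * μ + 2) / (2 * μ - α) with hνdef
  have hν : ν * (2 * μ - α) = α * μ + 2 := div_mul_cancel₀ _ hne
  have hXX : ⟪X, X⟫_ℝ = 1 := by
    rw [real_inner_self_eq_norm_sq, hXn]; norm_num
  have hφφX : φ (φ X) = -X := by rw [hφφ, hXξ, zero_smul, add_zero]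
  have hφXξ : ⟪φ X, ξ⟫_ℝ = 0 := hηφ X
  have hφXφX : ⟪φ X, φ X⟫_ℝ = 1 := by rw [hφg, hXξ, hXX]; ring
  have hφAφX : φ (A (φ X)) = -(ν • X) := by
    rw [hAφ, map_smul, hφφX, smul_neg]
  have hφAX : φ (A X) = μ • φ X := by rw [hAX, map_smul]
  have h1 : AF φ A ξ (φ X) X = (ν * α - ν * μ) • ξ := by
    simp only [AF, choF, hφAφX, hAX, map_sub, map_smul, hAξ, inner_neg_left,
      real_inner_smul_left, real_inner_smul_right, hXξ, hXX, hξξ]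
    module
  have h2 : AF φ A ξ X (φ X) = (μ * ν - μ * α) • ξ := by
    simp only [AF, choF, hφAX, hAφ, map_sub, map_smul, hAξ,
      real_inner_smul_left, real_inner_smul_right, hφXξ, hφXφX, hξξ]
    module
  have heqv := hpure X X hXξ hXξ
  rw [h1, h2] at heqv
  have hco : ν * α - ν * μ = μ * ν - μ * α := by
    by_contra hne2
    have : (ν * α - ν * μ - (μ * ν - μ * α)) • ξ = 0 := by
      rw [sub_smul, heqv, sub_self]
    rcases smul_eq_zero.mp this with h | h
    · exact hne2 (by linarith [sub_eq_zero.mp (by linarith [h] : ν * α - ν * μ - (μ * ν - μ * α) = 0)])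
    · exact hξ0 h
  nlinarith [hν, hco]
end

section
/- Let V, g, φ, ξ, η, A, D be as in the context, and suppose Aξ = αξ + βU for some real numbers α, β with β ≠ 0 and some unit vector U ∈ D (the non-Hopf case). If A_F is η-skewpure with respect to φ, i.e. A_F(φX, Y) + A_F(X, φY) = 0 for all X, Y ∈ D, then g(AX, Y) = 0 for all X, Y ∈ D (the pointwise ruled condition). (Theorem 2, non-Hopf case.) -/
open scoped InnerProductSpace

theorem thm2_nonHopf {V : Type*} [NormedAddCommGroup V] [InnerProductSpace ℝ V]
    [FiniteDimensional ℝ V] (hdim : 5 ≤ Module.finrank ℝ V)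
    (φ : V →ₗ[ℝ] V) (ξ : V) (hξ : ‖ξ‖ = 1)
    (hφφ : ∀ X : V, φ (φ X) = -X + ⟪X, ξ⟫_ℝ • ξ)
    (hφg : ∀ X Y : V, ⟪φ X, φ Y⟫_ℝ = ⟪X, Y⟫_ℝ - ⟪X, ξ⟫_ℝ * ⟪Y, ξ⟫_ℝ)
    (A : V →ₗ[ℝ] V) (hA : ∀ X Y : V, ⟪A X, Y⟫_ℝ = ⟪X, A Y⟫_ℝ)
    (α β : ℝ) (hβ : β ≠ 0) (U : V) (hU : ‖U‖ = 1) (hUξ : ⟪U, ξ⟫_ℝ = 0)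
    (hAξ : A ξ = α • ξ + β • U)
    (hskew : ∀ X Y : V, ⟪X, ξ⟫_ℝ = 0 → ⟪Y, ξ⟫_ℝ = 0 →
      AF φ A ξ (φ X) Y + AF φ A ξ X (φ Y) = 0) :
    ∀ X Y : V, ⟪X, ξ⟫_ℝ = 0 → ⟪Y, ξ⟫_ℝ = 0 → ⟪A X, Y⟫_ℝ = 0 := by
  have hξξ : ⟪ξ, ξ⟫_ℝ = 1 := by
    have h := real_inner_self_eq_norm_sq ξ
    rw [hξ] at h; simpa using h
  have hUU : ⟪U, U⟫_ℝ = 1 := by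
    have h := real_inner_self_eq_norm_sq U
    rw [hU] at h; simpa using h
  have hξne : ξ ≠ 0 := by
    intro h; rw [h, norm_zero] at hξ; norm_num at hξ
  -- φ ξ = 0
  have hφξ : φ ξ = 0 := by
    have h := hφg ξ ξ
    rw [hξξ] at h
    have h0 : ⟪φ ξ, φ ξ⟫_ℝ = 0 := by linarith
    exact inner_self_eq_zero.mp h0
  -- η (φ Z) = 0
  have hηφ : ∀ Z : V, ⟪φ Z, ξ⟫_ℝ = 0 := by
    intro Z
    have h1 : φ (φ (φ Z)) = -(φ Z) := by
      rw [hφφ Z, map_add, map_neg, map_smul, hφξ, smul_zero, add_zero]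
    have h2 := hφφ (φ Z)
    rw [h1] at h2
    have h3 : ⟪φ Z, ξ⟫_ℝ • ξ = 0 := (left_eq_add.mp h2)
    rcases smul_eq_zero.mp h3 with h | h
    · exact h
    · exact absurd h hξne
  -- skewness of φ
  have hskw : ∀ Z W : V, ⟪φ Z, W⟫_ℝ = -⟪Z, φ W⟫_ℝ := by
    intro Z W
    have h := hφg Z (φ W)
    rw [hηφ W, mul_zero, sub_zero, hφφ W] at h
    rw [inner_add_right, inner_neg_right, real_inner_smul_right, hηφ Z, mul_zero,
      add_zero] at h
    linarith
  -- φ ∘ φ = -id on D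
  have hφφD : ∀ Z : V, ⟪Z, ξ⟫_ℝ = 0 → φ (φ Z) = -Z := by
    intro Z hZ; rw [hφφ Z, hZ, zero_smul, add_zero]
  -- ⟪A Z, ξ⟫ = β ⟪Z, U⟫ for Z ∈ D
  have hAD : ∀ Z : V, ⟪Z, ξ⟫_ℝ = 0 → ⟪A Z, ξ⟫_ℝ = β * ⟪Z, U⟫_ℝ := by
    intro Z hZ
    rw [hA Z ξ, hAξ, inner_add_right, real_inner_smul_right, real_inner_smul_right,
      hZ, mul_zero, zero_add]
  -- ⟪A ξ, W⟫ = β ⟪U, W⟫ for W ∈ D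
  have hAξW : ∀ W : V, ⟪W, ξ⟫_ℝ = 0 → ⟪A ξ, W⟫_ℝ = β * ⟪U, W⟫_ℝ := by
    intro W hW
    have hξW : ⟪ξ, W⟫_ℝ = 0 := by rw [real_inner_comm W ξ]; exact hW
    rw [hAξ, inner_add_left, real_inner_smul_left, real_inner_smul_left,
      hξW, mul_zero, zero_add]
  -- expansion of ⟪AF X' Y', W'⟫ for Y', W' ∈ D
  have expand : ∀ X' Y' W' : V, ⟪Y', ξ⟫_ℝ = 0 → ⟪W', ξ⟫_ℝ = 0 →
      ⟪AF φ A ξ X' Y', W'⟫_ℝ =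
        -(β * ⟪Y', U⟫_ℝ * ⟪φ (A X'), W'⟫_ℝ) - ⟪φ (A X'), Y'⟫_ℝ * (β * ⟪U, W'⟫_ℝ) := by
    intro X' Y' W' hY' hW'
    have hξW' : ⟪ξ, W'⟫_ℝ = 0 := by rw [real_inner_comm]; exact hW'
    simp only [AF, choF, map_sub, map_smul, inner_sub_left, real_inner_smul_left,
      hY', zero_smul, sub_zero, hξW', mul_zero, zero_sub]
    rw [hAD Y' hY', hAξW W' hW']
  -- the key scalar identity for X, Y, W ∈ D
  have key : ∀ X Y W : V, ⟪X, ξ⟫_ℝ = 0 → ⟪Y, ξ⟫_ℝ = 0 → ⟪W, ξ⟫_ℝ = 0 →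
      ⟪Y, U⟫_ℝ * ⟪φ (A (φ X)), W⟫_ℝ + ⟪φ Y, U⟫_ℝ * ⟪φ (A X), W⟫_ℝ +
        (⟪φ (A (φ X)), Y⟫_ℝ + ⟪φ (A X), φ Y⟫_ℝ) * ⟪U, W⟫_ℝ = 0 := by
    intro X Y W hX hY hW
    have h0 : ⟪AF φ A ξ (φ X) Y + AF φ A ξ X (φ Y), W⟫_ℝ = 0 := by
      rw [hskew X Y hX hY, inner_zero_left]
    rw [inner_add_left, expand (φ X) Y W hY hW, expand X (φ Y) W (hηφ Y) hW] at h0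
    have hβ' : β * (⟪Y, U⟫_ℝ * ⟪φ (A (φ X)), W⟫_ℝ + ⟪φ Y, U⟫_ℝ * ⟪φ (A X), W⟫_ℝ +
        (⟪φ (A (φ X)), Y⟫_ℝ + ⟪φ (A X), φ Y⟫_ℝ) * ⟪U, W⟫_ℝ) = 0 := by linarith [h0]
    rcases mul_eq_zero.mp hβ' with h | h
    · exact absurd h hβ
    · exact h
  -- basic facts about U and φU
  have hφUξ : ⟪φ U, ξ⟫_ℝ = 0 := hηφ U
  have hφUU : ⟪φ U, U⟫_ℝ = 0 := by
    have h := hskw U U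
    have h2 : ⟪φ U, U⟫_ℝ = ⟪U, φ U⟫_ℝ := real_inner_comm U (φ U)
    linarith
  have hUφU : ⟪U, φ U⟫_ℝ = 0 := by
    rw [← real_inner_comm U (φ U)]; exact hφUU
  have hφφU : φ (φ U) = -U := hφφD U hUξ
  -- main step: ⟪φ (A X), W⟫ = 0 for all X, W ∈ D
  have main : ∀ X W : V, ⟪X, ξ⟫_ℝ = 0 → ⟪W, ξ⟫_ℝ = 0 → ⟪φ (A X), W⟫_ℝ = 0 := by
    intro X W hX hW
    -- (1') with W := φ U : ⟪φ A φ X, φ U⟫ = 0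
    have h1 := key X U (φ U) hX hUξ hφUξ
    rw [hUU, hφUU, hUφU] at h1
    have h1' : ⟪φ (A (φ X)), φ U⟫_ℝ = 0 := by linarith
    -- (2') with W := U : ⟪φ A X, U⟫ = 0
    have h2 := key X (φ U) U hX hφUξ hUξ
    rw [hφφU, hφUU, hUU, inner_neg_left, inner_neg_right, h1'] at h2
    rw [hUU] at h2
    have h2' : ⟪φ (A X), U⟫_ℝ = 0 := by linarith
    -- (2') with general W
    have h3 := key X (φ U) W hX hφUξ hW
    rw [hφφU, hφUU, inner_neg_left, inner_neg_right, h1', h2'] at h3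
    rw [hUU] at h3
    linarith
  intro X Y hX hY
  -- φ (A X) = 0
  have hφAX : φ (A X) = 0 := by
    have h := main X (φ (A X)) hX (hηφ (A X))
    exact inner_self_eq_zero.mp h
  -- A X = ⟪A X, ξ⟫ • ξ
  have hAX : A X = ⟪A X, ξ⟫_ℝ • ξ := by
    have h := hφφ (A X)
    rw [hφAX, map_zero] at h
    have h' : -A X + ⟪A X, ξ⟫_ℝ • ξ = 0 := h.symm
    have h'' := neg_add_eq_zero.mp h'
    exact h''
  rw [hAX, real_inner_smul_left, real_inner_comm Y ξ, hY, mul_zero]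
end

section
/- Let V, g, φ, ξ, η, A, D be as in the context, suppose Aξ = αξ for some real number α (the Hopf case) and that A satisfies the Maeda relations for α. If A_F is η-skewpure with respect to φ, i.e. A_F(φX, Y) + A_F(X, φY) = 0 for all X, Y ∈ D, then either α = 0 or A ∘ φ = φ ∘ A. (Theorem 2, Hopf case.) -/
open scoped InnerProductSpace

/-- Key pointwise lemma: if `α ≠ 0`, then for any unit eigenvector `X ∈ D` of `A`,
the skewpure condition together with Maeda's relation forces `A (φ X) = φ (A X)`. -/
lemma key_eigen {V : Type*} [NormedAddCommGroup V] [InnerProductSpace ℝ V]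
    (φ : V →ₗ[ℝ] V) (ξ : V) (hξ : ‖ξ‖ = 1)
    (hφφ : ∀ X : V, φ (φ X) = -X + ⟪X, ξ⟫_ℝ • ξ)
    (hφg : ∀ X Y : V, ⟪φ X, φ Y⟫_ℝ = ⟪X, Y⟫_ℝ - ⟪X, ξ⟫_ℝ * ⟪Y, ξ⟫_ℝ)
    (A : V →ₗ[ℝ] V)
    (α : ℝ) (hAξ : A ξ = α • ξ) (hα : α ≠ 0)
    (hMaeda : ∀ (X : V) (l : ℝ), ‖X‖ = 1 → ⟪X, ξ⟫_ℝ = 0 → A X = l • X →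
      2 * l - α ≠ 0 ∧ A (φ X) = ((α * l + 2) / (2 * l - α)) • φ X)
    (hskew : ∀ X Y : V, ⟪X, ξ⟫_ℝ = 0 → ⟪Y, ξ⟫_ℝ = 0 →
      AF φ A ξ (φ X) Y + AF φ A ξ X (φ Y) = 0)
    (X : V) (l : ℝ) (hX1 : ‖X‖ = 1) (hXξ : ⟪X, ξ⟫_ℝ = 0) (hAX : A X = l • X) :
    A (φ X) = φ (A X) := by
  have hξ0 : ξ ≠ 0 := by
    intro h; rw [h, norm_zero] at hξ; exact one_ne_zero hξ.symm
  have hXX : ⟪X, X⟫_ℝ = 1 := by rw [real_inner_self_eq_norm_sq, hX1]; norm_num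
  obtain ⟨hne, hAφX⟩ := hMaeda X l hX1 hXξ hAX
  set μ : ℝ := (α * l + 2) / (2 * l - α) with hμ
  -- φ ξ = 0
  have hφξ : φ ξ = 0 := by
    have h := hφg ξ ξ
    have hξξ : ⟪ξ, ξ⟫_ℝ = 1 := by rw [real_inner_self_eq_norm_sq, hξ]; norm_num
    rw [hξξ] at h
    have : ⟪φ ξ, φ ξ⟫_ℝ = 0 := by rw [h]; ring
    exact inner_self_eq_zero.mp this
  -- η(φ Z) = 0
  have hηφ : ∀ Z : V, ⟪φ Z, ξ⟫_ℝ = 0 := by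
    intro Z
    have h1 : φ (φ (φ Z)) = -φ Z + ⟪φ Z, ξ⟫_ℝ • ξ := hφφ (φ Z)
    have h2 : φ (φ (φ Z)) = -φ Z := by
      rw [hφφ Z, map_add, map_neg, map_smul, hφξ, smul_zero, add_zero]
    rw [h2] at h1
    have : ⟪φ Z, ξ⟫_ℝ • ξ = 0 := by
      have := h1.symm
      rwa [add_eq_left] at this
    rcases smul_eq_zero.mp this with h | h
    · exact h
    · exact absurd h hξ0
  have hφφX : φ (φ X) = -X := by rw [hφφ, hXξ, zero_smul, add_zero]
  have hφXφX : ⟪φ X, φ X⟫_ℝ = 1 := by rw [hφg, hXξ, hXX]; ring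
  -- compute the two AF terms
  have c1 : φ (A (φ X)) = (-μ) • X := by
    rw [hAφX, map_smul, hφφX, smul_neg, ← neg_smul]
  have c2 : φ (A X) = l • φ X := by rw [hAX, map_smul]
  have e1 : AF φ A ξ (φ X) X = (μ * α - l * μ) • ξ := by
    simp only [AF, choF, c1, hAX, hAξ, map_sub, map_smul,
      real_inner_smul_left, real_inner_smul_right, hXX, hXξ, hηφ]
    simp only [mul_zero, zero_smul, zero_mul, smul_zero, sub_zero, mul_one]
    rw [smul_smul]
    module
  have e2 : AF φ A ξ X (φ X) = (l * μ - l * α) • ξ := by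
    simp only [AF, choF, c2, hAφX, hAξ, map_sub, map_smul,
      real_inner_smul_left, real_inner_smul_right, hφXφX, hηφ]
    simp only [mul_zero, zero_smul, zero_mul, smul_zero, sub_zero, mul_one]
    rw [smul_smul]
    module
  have hsum := hskew X X hXξ hXξ
  rw [e1, e2, ← add_smul] at hsum
  have hcoef : μ * α - l * μ + (l * μ - l * α) = 0 := by
    rcases smul_eq_zero.mp hsum with h | h
    · exact h
    · exact absurd h hξ0
  have hμl : μ = l := by
    have : α * (μ - l) = 0 := by linarith [hcoef]
    rcases mul_eq_zero.mp this with h | h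
    · exact absurd h hα
    · linarith [h]
  rw [hAφX, hμl, hAX, map_smul]

theorem thm2_hopf {V : Type*} [NormedAddCommGroup V] [InnerProductSpace ℝ V]
    [FiniteDimensional ℝ V] (hdim : 5 ≤ Module.finrank ℝ V)
    (φ : V →ₗ[ℝ] V) (ξ : V) (hξ : ‖ξ‖ = 1)
    (hφφ : ∀ X : V, φ (φ X) = -X + ⟪X, ξ⟫_ℝ • ξ)
    (hφg : ∀ X Y : V, ⟪φ X, φ Y⟫_ℝ = ⟪X, Y⟫_ℝ - ⟪X, ξ⟫_ℝ * ⟪Y, ξ⟫_ℝ)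
    (A : V →ₗ[ℝ] V) (hA : ∀ X Y : V, ⟪A X, Y⟫_ℝ = ⟪X, A Y⟫_ℝ)
    (α : ℝ) (hAξ : A ξ = α • ξ)
    (hMaeda : ∀ (X : V) (l : ℝ), ‖X‖ = 1 → ⟪X, ξ⟫_ℝ = 0 → A X = l • X →
      2 * l - α ≠ 0 ∧ A (φ X) = ((α * l + 2) / (2 * l - α)) • φ X)
    (hskew : ∀ X Y : V, ⟪X, ξ⟫_ℝ = 0 → ⟪Y, ξ⟫_ℝ = 0 →
      AF φ A ξ (φ X) Y + AF φ A ξ X (φ Y) = 0) :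
    α = 0 ∨ ∀ X : V, A (φ X) = φ (A X) := by
  by_cases hα : α = 0
  · exact Or.inl hα
  right
  have hξ0 : ξ ≠ 0 := by
    intro h; rw [h, norm_zero] at hξ; exact one_ne_zero hξ.symm
  have hξξ : ⟪ξ, ξ⟫_ℝ = 1 := by rw [real_inner_self_eq_norm_sq, hξ]; norm_num
  have hφξ : φ ξ = 0 := by
    have h := hφg ξ ξ
    rw [hξξ] at h
    have : ⟪φ ξ, φ ξ⟫_ℝ = 0 := by rw [h]; ring
    exact inner_self_eq_zero.mp this
  -- the orthogonal complement of ξ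
  set K : Submodule ℝ V := (Submodule.span ℝ {ξ})ᗮ with hK
  have hmemK : ∀ x : V, x ∈ K ↔ ⟪ξ, x⟫_ℝ = 0 := fun x =>
    Submodule.mem_orthogonal_singleton_iff_inner_right
  have hAK : ∀ x ∈ K, A x ∈ K := by
    intro x hx
    rw [hmemK] at hx ⊢
    rw [real_inner_comm, hA, real_inner_comm, hAξ, real_inner_smul_left, hx, mul_zero]
  set T : K →ₗ[ℝ] K := A.restrict hAK with hT
  have hTsymm : T.IsSymmetric := by
    intro x y
    show ⟪(↑(T x) : V), (↑y : V)⟫_ℝ = ⟪(↑x : V), (↑(T y) : V)⟫_ℝ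
    rw [hT, LinearMap.restrict_coe_apply, LinearMap.restrict_coe_apply, hA]
  set n : ℕ := Module.finrank ℝ K with hn
  set b := hTsymm.eigenvectorBasis hn.symm with hb
  -- the commutator vanishes on each eigenvector
  set B : V →ₗ[ℝ] V := A ∘ₗ φ - φ ∘ₗ A with hB
  have hBeigen : ∀ i : Fin n, B ((b i : V)) = 0 := by
    intro i
    have h1 : ‖(b i : V)‖ = 1 := by
      rw [← Submodule.coe_norm]
      exact b.orthonormal.1 i
    have h2 : ⟪(b i : V), ξ⟫_ℝ = 0 := by
      rw [real_inner_comm]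
      exact (hmemK _).mp (b i).2
    have h3 : A ((b i : V)) = (hTsymm.eigenvalues hn.symm i) • (b i : V) := by
      have := hTsymm.apply_eigenvectorBasis hn.symm i
      have := congrArg (Subtype.val) this
      rwa [LinearMap.restrict_coe_apply] at this
    have := key_eigen φ ξ hξ hφφ hφg A α hAξ hα hMaeda hskew
      (b i : V) _ h1 h2 h3
    simp only [hB, LinearMap.sub_apply, LinearMap.comp_apply, this, sub_self]
  have hBK : ∀ x ∈ K, B x = 0 := by
    intro x hx
    have : B ∘ₗ K.subtype = (0 : K →ₗ[ℝ] V) := by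
      apply Module.Basis.ext b.toBasis
      intro i
      simp only [LinearMap.comp_apply, Submodule.coe_subtype, OrthonormalBasis.coe_toBasis,
        LinearMap.zero_apply]
      exact hBeigen i
    have := congrArg (fun f => f ⟨x, hx⟩) this
    simpa using this
  have hBξ : B ξ = 0 := by
    simp only [hB, LinearMap.sub_apply, LinearMap.comp_apply, hφξ, hAξ, map_smul, hφξ,
      smul_zero, map_zero, sub_zero, sub_self]
  intro Z
  have hdecomp : Z = ⟪Z, ξ⟫_ℝ • ξ + (Z - ⟪Z, ξ⟫_ℝ • ξ) := by abel
  have hmem : Z - ⟪Z, ξ⟫_ℝ • ξ ∈ K := by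
    rw [hmemK, inner_sub_right, real_inner_smul_right, real_inner_comm ξ Z, hξξ, mul_one,
      sub_self]
  have hBZ : B Z = 0 := by
    rw [hdecomp, map_add, map_smul, hBξ, smul_zero, zero_add, hBK _ hmem]
  have h0 : A (φ Z) - φ (A Z) = 0 := hBZ
  exact sub_eq_zero.mp h0
end

section
/- Let V, g, φ, ξ, η, A, D be as in the context. If Aξ = αξ for some real number α and A ∘ φ = φ ∘ A (the pointwise condition characterizing type (A) real hypersurfaces), then A_F is η-skewpure with respect to φ: A_F(φX, Y) + A_F(X, φY) = 0 for all X, Y ∈ D. (Converse direction of Theorem 2, type (A) case.) -/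
open scoped InnerProductSpace

theorem thm2_converse_typeA {V : Type*} [NormedAddCommGroup V] [InnerProductSpace ℝ V]
    [FiniteDimensional ℝ V] (hdim : 5 ≤ Module.finrank ℝ V)
    (φ : V →ₗ[ℝ] V) (ξ : V) (hξ : ‖ξ‖ = 1)
    (hφφ : ∀ X : V, φ (φ X) = -X + ⟪X, ξ⟫_ℝ • ξ)
    (hφg : ∀ X Y : V, ⟪φ X, φ Y⟫_ℝ = ⟪X, Y⟫_ℝ - ⟪X, ξ⟫_ℝ * ⟪Y, ξ⟫_ℝ)
    (A : V →ₗ[ℝ] V) (hA : ∀ X Y : V, ⟪A X, Y⟫_ℝ = ⟪X, A Y⟫_ℝ)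
    (α : ℝ) (hAξ : A ξ = α • ξ)
    (hcomm : ∀ X : V, A (φ X) = φ (A X)) :
    ∀ X Y : V, ⟪X, ξ⟫_ℝ = 0 → ⟪Y, ξ⟫_ℝ = 0 →
      AF φ A ξ (φ X) Y + AF φ A ξ X (φ Y) = 0 := by
  intro X Y hX hY
  have hξξ : ⟪ξ, ξ⟫_ℝ = 1 := by
    rw [real_inner_self_eq_norm_sq, hξ]; norm_num
  have hηφ : ∀ Z : V, ⟪φ Z, ξ⟫_ℝ = 0 := by
    intro Z
    have h1 := hφg (φ Z) (φ Z)
    have h0 := hφg Z Z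
    rw [hφφ Z] at h1
    simp only [inner_add_add_self, inner_neg_neg, inner_neg_left, inner_neg_right,
      inner_smul_left, inner_smul_right, RCLike.star_def, starRingEnd_apply, star_trivial,
      hξξ] at h1
    simp only [show ⟪ξ, Z⟫_ℝ = ⟪Z, ξ⟫_ℝ from real_inner_comm Z ξ] at h1
    have hc : ⟪φ Z, ξ⟫_ℝ * ⟪φ Z, ξ⟫_ℝ = 0 := by nlinarith [h1, h0]
    exact mul_self_eq_zero.mp hc
  have hAXξ : ⟪A X, ξ⟫_ℝ = 0 := by
    rw [hA, hAξ, inner_smul_right, hX, mul_zero]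
  have hAYξ : ⟪A Y, ξ⟫_ℝ = 0 := by
    rw [hA, hAξ, inner_smul_right, hY, mul_zero]
  have hAφYξ : ⟪A (φ Y), ξ⟫_ℝ = 0 := by
    rw [hA, hAξ, inner_smul_right, hηφ, mul_zero]
  have key : φ (A (φ X)) = -(A X) := by
    rw [hcomm, hφφ, hAXξ]; simp
  have hAφY : A (φ Y) = φ (A Y) := hcomm Y
  have e1 : ⟪φ (A X), φ (A Y)⟫_ℝ = ⟪A X, A Y⟫_ℝ := by
    rw [hφg, hAXξ, zero_mul, sub_zero]
  have e2 : ⟪φ (A X), φ Y⟫_ℝ = ⟪A X, Y⟫_ℝ := by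
    rw [hφg, hAXξ, zero_mul, sub_zero]
  simp only [AF, choF, key, hAφY, e1, e2, hAYξ, hAφYξ, hY, hηφ, zero_smul, sub_zero,
    inner_neg_left, map_sub, map_smul, map_neg, map_zero, neg_zero, hAξ, neg_smul, smul_neg]
  module
end

section
/- Let V, g, φ, ξ, η, A, D be as in the context, and suppose Aξ = αξ + βU for some real numbers α, β with β ≠ 0 and some unit vector U ∈ D (the non-Hopf case). If A_F(φX, Y) = φ(A_F(X, Y)) for all X, Y ∈ D, then AU = βξ, A(φU) = 0, and AZ = 0 for every Z ∈ D orthogonal to both U and φU; in particular g(AX, Y) = 0 for all X, Y ∈ D (the pointwise ruled condition). (Theorem 3, non-Hopf case.) -/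
/-!
Expand `A_F(φX, Y) = φ(A_F(X, Y))` for `X, Y ∈ D` using `φξ = 0` and `Aξ = αξ + βU`, and pair
the result with `U` and with `φU`. Since `β ≠ 0`, this shows that `φ(AX)` is orthogonal to every
`Y ∈ D` with `Y ⊥ U`, and (taking `Y = U`) to `U` itself. As `φ(AX)` lies in `D`, it vanishes, so
`AX = g(AX, ξ) ξ = β g(X, U) ξ` for all `X ∈ D`, which gives every claim at once.
-/

open scoped InnerProductSpace

structure IsAlmostContactMetric {V : Type*} [NormedAddCommGroup V] [InnerProductSpace ℝ V]
    (φ : V →ₗ[ℝ] V) (ξ : V) : Prop where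
  norm_xi : ‖ξ‖ = 1
  phi_phi : ∀ X, φ (φ X) = -X + ⟪X, ξ⟫_ℝ • ξ
  inner_phi_phi : ∀ X Y, ⟪φ X, φ Y⟫_ℝ = ⟪X, Y⟫_ℝ - ⟪X, ξ⟫_ℝ * ⟪Y, ξ⟫_ℝ

namespace IsAlmostContactMetric

variable {V : Type*} [NormedAddCommGroup V] [InnerProductSpace ℝ V] {φ : V →ₗ[ℝ] V} {ξ : V}

theorem inner_xi_self (h : IsAlmostContactMetric φ ξ) : ⟪ξ, ξ⟫_ℝ = 1 := by
  rw [real_inner_self_eq_norm_sq, h.norm_xi, one_pow]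

theorem phi_xi (h : IsAlmostContactMetric φ ξ) : φ ξ = 0 := by
  have hξ := h.inner_phi_phi ξ ξ
  rw [h.inner_xi_self, mul_one, sub_self] at hξ
  exact inner_self_eq_zero.mp hξ

theorem inner_phi_xi (h : IsAlmostContactMetric φ ξ) (X : V) : ⟪φ X, ξ⟫_ℝ = 0 := by
  have hφ3 : φ (φ (φ X)) = -φ X := by
    rw [h.phi_phi X, map_add, map_neg, map_smul, h.phi_xi, smul_zero, add_zero]
  have hξ : ξ ≠ 0 := norm_ne_zero_iff.mp (by rw [h.norm_xi]; exact one_ne_zero)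
  simpa [hφ3, hξ] using h.phi_phi (φ X)

theorem inner_phi_left (h : IsAlmostContactMetric φ ξ) (X Y : V) :
    ⟪φ X, Y⟫_ℝ = -⟪X, φ Y⟫_ℝ := by
  have hXY := h.inner_phi_phi X (φ Y)
  simp only [h.phi_phi Y, inner_add_right, inner_neg_right, real_inner_smul_right,
    h.inner_phi_xi, mul_zero, add_zero, sub_zero] at hXY
  linarith

theorem inner_phi_self (h : IsAlmostContactMetric φ ξ) (X : V) : ⟪φ X, X⟫_ℝ = 0 := by
  have hXX := h.inner_phi_left X X
  rw [real_inner_comm (φ X) X] at hXX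
  linarith

theorem eq_inner_smul_xi_of_phi_eq_zero (h : IsAlmostContactMetric φ ξ) {Z : V}
    (hZ : φ Z = 0) : Z = ⟪Z, ξ⟫_ℝ • ξ := by
  have hφφ := h.phi_phi Z
  rwa [hZ, map_zero, eq_neg_add_iff_add_eq, add_zero] at hφφ

end IsAlmostContactMetric

section ShapeOperator

variable {V : Type*} [NormedAddCommGroup V] [InnerProductSpace ℝ V]

theorem AF_eq_of_inner_eq_zero (φ A : V →ₗ[ℝ] V) (ξ X : V) {Y : V} (hY : ⟪Y, ξ⟫_ℝ = 0) :
    AF φ A ξ X Y = ⟪φ (A X), A Y⟫_ℝ • ξ - ⟪A Y, ξ⟫_ℝ • φ (A X) - ⟪φ (A X), Y⟫_ℝ • A ξ := by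
  simp only [AF, choF, hY, zero_smul, sub_zero, map_smul]

def AFCommPhi (φ A : V →ₗ[ℝ] V) (ξ : V) : Prop :=
  ∀ X Y : V, ⟪X, ξ⟫_ℝ = 0 → ⟪Y, ξ⟫_ℝ = 0 → AF φ A ξ (φ X) Y = φ (AF φ A ξ X Y)

variable {φ A : V →ₗ[ℝ] V} {ξ U : V} {α β : ℝ}

theorem inner_apply_xi_of_apply_xi (hA : A.IsSymmetric) (hAξ : A ξ = α • ξ + β • U) (X : V) :
    ⟪A X, ξ⟫_ℝ = α * ⟪X, ξ⟫_ℝ + β * ⟪X, U⟫_ℝ := by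
  rw [hA, hAξ, inner_add_right, real_inner_smul_right, real_inner_smul_right]

namespace AFCommPhi

theorem expand (hφ : AFCommPhi φ A ξ) (h : IsAlmostContactMetric φ ξ) (hA : A.IsSymmetric)
    (hAξ : A ξ = α • ξ + β • U) {X Y : V} (hX : ⟪X, ξ⟫_ℝ = 0) (hY : ⟪Y, ξ⟫_ℝ = 0) :
    ⟪φ (A (φ X)), A Y⟫_ℝ • ξ - (β * ⟪Y, U⟫_ℝ) • φ (A (φ X)) - ⟪φ (A (φ X)), Y⟫_ℝ • A ξ =
      -(β * ⟪Y, U⟫_ℝ) • φ (φ (A X)) - (β * ⟪φ (A X), Y⟫_ℝ) • φ U := by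
  have hAY : ⟪A Y, ξ⟫_ℝ = β * ⟪Y, U⟫_ℝ := by
    rw [inner_apply_xi_of_apply_xi hA hAξ, hY, mul_zero, zero_add]
  have hφAξ : φ (A ξ) = β • φ U := by
    rw [hAξ, map_add, map_smul, map_smul, h.phi_xi, smul_zero, zero_add]
  have hXY := hφ X Y hX hY
  rw [AF_eq_of_inner_eq_zero _ _ _ _ hY, AF_eq_of_inner_eq_zero _ _ _ _ hY, hAY] at hXY
  rw [hXY, map_sub, map_sub, map_smul, map_smul, map_smul, h.phi_xi, hφAξ]
  module

theorem phi_apply_eq_zero (hφ : AFCommPhi φ A ξ) (h : IsAlmostContactMetric φ ξ)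
    (hA : A.IsSymmetric) (hβ : β ≠ 0) (hU : ‖U‖ = 1) (hUξ : ⟪U, ξ⟫_ℝ = 0)
    (hAξ : A ξ = α • ξ + β • U) {X : V} (hX : ⟪X, ξ⟫_ℝ = 0) : φ (A X) = 0 := by
  have hUU : ⟪U, U⟫_ℝ = 1 := by rw [real_inner_self_eq_norm_sq, hU, one_pow]
  have hξU : ⟪ξ, U⟫_ℝ = 0 := by rw [real_inner_comm, hUξ]
  have hξφU : ⟪ξ, φ U⟫_ℝ = 0 := by rw [real_inner_comm, h.inner_phi_xi]
  have hUφU : ⟪U, φ U⟫_ℝ = 0 := by rw [real_inner_comm, h.inner_phi_self]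
  have hφUφU : ⟪φ U, φ U⟫_ℝ = 1 := by rw [h.inner_phi_phi, hUξ, hUU]; ring
  have pair_U : ∀ Y, ⟪Y, ξ⟫_ℝ = 0 → ⟪Y, U⟫_ℝ = 0 → ⟪φ (A (φ X)), Y⟫_ℝ = 0 := by
    intro Y hY hYU
    have hXY := congrArg (⟪·, U⟫_ℝ) (hφ.expand h hA hAξ hX hY)
    simp only [inner_sub_left, real_inner_smul_left, hAξ, inner_add_left, hYU, hξU, hUU,
      h.inner_phi_self] at hXY
    refine (mul_eq_zero.mp ?_).resolve_left hβ
    linarith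
  have pair_φU : ∀ Y, ⟪Y, ξ⟫_ℝ = 0 → ⟪Y, U⟫_ℝ = 0 → ⟪φ (A X), Y⟫_ℝ = 0 := by
    intro Y hY hYU
    have hXY := congrArg (⟪·, φ U⟫_ℝ) (hφ.expand h hA hAξ hX hY)
    simp only [inner_sub_left, real_inner_smul_left, hAξ, inner_add_left, hYU, hξφU, hUφU,
      hφUφU] at hXY
    refine (mul_eq_zero.mp ?_).resolve_left hβ
    linarith
  have hφAX_U : ⟪φ (A X), U⟫_ℝ = 0 := by
    have hXU := congrArg (⟪·, φ U⟫_ℝ) (hφ.expand h hA hAξ hX hUξ)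
    simp only [inner_sub_left, real_inner_smul_left, hAξ, inner_add_left, hξφU, hUφU, hφUφU,
      hUU, pair_U (φ U) (h.inner_phi_xi U) (h.inner_phi_self U), h.inner_phi_phi,
      h.inner_phi_xi] at hXU
    refine (mul_eq_zero.mp ?_).resolve_left hβ
    linarith
  exact inner_self_eq_zero.mp (pair_φU _ (h.inner_phi_xi _) hφAX_U)

theorem apply_eq_smul_xi (hφ : AFCommPhi φ A ξ) (h : IsAlmostContactMetric φ ξ)
    (hA : A.IsSymmetric) (hβ : β ≠ 0) (hU : ‖U‖ = 1) (hUξ : ⟪U, ξ⟫_ℝ = 0)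
    (hAξ : A ξ = α • ξ + β • U) {X : V} (hX : ⟪X, ξ⟫_ℝ = 0) : A X = (β * ⟪X, U⟫_ℝ) • ξ := by
  rw [h.eq_inner_smul_xi_of_phi_eq_zero (hφ.phi_apply_eq_zero h hA hβ hU hUξ hAξ hX),
    inner_apply_xi_of_apply_xi hA hAξ, hX, mul_zero, zero_add]

end AFCommPhi

end ShapeOperator

theorem thm3_nonHopf_general {V : Type*} [NormedAddCommGroup V] [InnerProductSpace ℝ V]
    (φ : V →ₗ[ℝ] V) (ξ : V) (hξ : ‖ξ‖ = 1)
    (hφφ : ∀ X : V, φ (φ X) = -X + ⟪X, ξ⟫_ℝ • ξ)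
    (hφg : ∀ X Y : V, ⟪φ X, φ Y⟫_ℝ = ⟪X, Y⟫_ℝ - ⟪X, ξ⟫_ℝ * ⟪Y, ξ⟫_ℝ)
    (A : V →ₗ[ℝ] V) (hA : ∀ X Y : V, ⟪A X, Y⟫_ℝ = ⟪X, A Y⟫_ℝ)
    (α β : ℝ) (hβ : β ≠ 0) (U : V) (hU : ‖U‖ = 1) (hUξ : ⟪U, ξ⟫_ℝ = 0)
    (hAξ : A ξ = α • ξ + β • U)
    (hphi : ∀ X Y : V, ⟪X, ξ⟫_ℝ = 0 → ⟪Y, ξ⟫_ℝ = 0 →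
      AF φ A ξ (φ X) Y = φ (AF φ A ξ X Y)) :
    A U = β • ξ ∧ A (φ U) = 0 ∧
      (∀ Z : V, ⟪Z, ξ⟫_ℝ = 0 → ⟪Z, U⟫_ℝ = 0 → ⟪Z, φ U⟫_ℝ = 0 → A Z = 0) ∧
      (∀ X Y : V, ⟪X, ξ⟫_ℝ = 0 → ⟪Y, ξ⟫_ℝ = 0 → ⟪A X, Y⟫_ℝ = 0) := by
  have h : IsAlmostContactMetric φ ξ := ⟨hξ, hφφ, hφg⟩
  have hAD : ∀ X : V, ⟪X, ξ⟫_ℝ = 0 → A X = (β * ⟪X, U⟫_ℝ) • ξ := fun X hX =>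
    AFCommPhi.apply_eq_smul_xi hphi h hA hβ hU hUξ hAξ hX
  refine ⟨?_, ?_, fun Z hZξ hZU _ => ?_, fun X Y hX hY => ?_⟩
  · rw [hAD U hUξ, real_inner_self_eq_norm_sq, hU, one_pow, mul_one]
  · rw [hAD (φ U) (h.inner_phi_xi U), h.inner_phi_self, mul_zero, zero_smul]
  · rw [hAD Z hZξ, hZU, mul_zero, zero_smul]
  · rw [hAD X hX, real_inner_smul_left, real_inner_comm Y ξ, hY, mul_zero]

theorem thm3_nonHopf {V : Type*} [NormedAddCommGroup V] [InnerProductSpace ℝ V]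
    [FiniteDimensional ℝ V] (hdim : 5 ≤ Module.finrank ℝ V)
    (φ : V →ₗ[ℝ] V) (ξ : V) (hξ : ‖ξ‖ = 1)
    (hφφ : ∀ X : V, φ (φ X) = -X + ⟪X, ξ⟫_ℝ • ξ)
    (hφg : ∀ X Y : V, ⟪φ X, φ Y⟫_ℝ = ⟪X, Y⟫_ℝ - ⟪X, ξ⟫_ℝ * ⟪Y, ξ⟫_ℝ)
    (A : V →ₗ[ℝ] V) (hA : ∀ X Y : V, ⟪A X, Y⟫_ℝ = ⟪X, A Y⟫_ℝ)
    (α β : ℝ) (hβ : β ≠ 0) (U : V) (hU : ‖U‖ = 1) (hUξ : ⟪U, ξ⟫_ℝ = 0)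
    (hAξ : A ξ = α • ξ + β • U)
    (hphi : ∀ X Y : V, ⟪X, ξ⟫_ℝ = 0 → ⟪Y, ξ⟫_ℝ = 0 →
      AF φ A ξ (φ X) Y = φ (AF φ A ξ X Y)) :
    A U = β • ξ ∧ A (φ U) = 0 ∧
      (∀ Z : V, ⟪Z, ξ⟫_ℝ = 0 → ⟪Z, U⟫_ℝ = 0 → ⟪Z, φ U⟫_ℝ = 0 → A Z = 0) ∧
      (∀ X Y : V, ⟪X, ξ⟫_ℝ = 0 → ⟪Y, ξ⟫_ℝ = 0 → ⟪A X, Y⟫_ℝ = 0) :=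
  thm3_nonHopf_general φ ξ hξ hφφ hφg A hA α β hβ U hU hUξ hAξ hphi
end

section
/- Let V, g, φ, ξ, η, A, D be as in the context. If g(AX, Y) = 0 for all X, Y ∈ D (the pointwise ruled condition), then A_F(φX, Y) = φ(A_F(X, Y)) for all X, Y ∈ D. (Converse direction of Theorem 3.) -/
open scoped InnerProductSpace

/-!
For the almost contact structure, `φ² = -1 + η ⊗ ξ` forces `φ ξ = 0` and `η ∘ φ = 0`, so `φ`
maps `D` into `D`. The ruled condition says that `A` maps `D` into `ℝ ξ`, hence `φ (A X) = 0` for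
every `X ∈ D`; then both Cho operators `F_X` and `F_{φX}` vanish, and so does each side of the
identity.
-/

section AlmostContact

variable {V : Type*} [NormedAddCommGroup V] [InnerProductSpace ℝ V] {φ : V →ₗ[ℝ] V} {ξ : V}

theorem almostContact_apply_xi (hξ : ⟪ξ, ξ⟫_ℝ = 1)
    (hφφ : ∀ X : V, φ (φ X) = -X + ⟪X, ξ⟫_ℝ • ξ) : φ ξ = 0 := by
  have hφφξ : φ (φ ξ) = 0 := by rw [hφφ, hξ, one_smul, neg_add_cancel]
  -- `φ³ ξ = 0` turns the structure equation at `φ ξ` into `φ ξ = η(φ ξ) ξ`.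
  have hprop : φ ξ = ⟪φ ξ, ξ⟫_ℝ • ξ := by
    have h := hφφ (φ ξ)
    rwa [hφφξ, map_zero, eq_comm, neg_add_eq_zero] at h
  have hsq : ⟪φ ξ, ξ⟫_ℝ * ⟪φ ξ, ξ⟫_ℝ = 0 := by
    have h := congrArg (⟪·, ξ⟫_ℝ) (congrArg φ hprop)
    simp only [hφφξ, map_smul, inner_zero_left, real_inner_smul_left] at h
    linarith
  rw [hprop, mul_self_eq_zero.mp hsq, zero_smul]

theorem almostContact_inner_apply_xi (hξ : ⟪ξ, ξ⟫_ℝ = 1)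
    (hφφ : ∀ X : V, φ (φ X) = -X + ⟪X, ξ⟫_ℝ • ξ) (X : V) : ⟪φ X, ξ⟫_ℝ = 0 := by
  have h := hφφ (φ X)
  rw [hφφ X, map_add, map_neg, map_smul, almostContact_apply_xi hξ hφφ, smul_zero,
    add_zero] at h
  have hzero : ⟪φ X, ξ⟫_ℝ • ξ = 0 := by simpa using h
  simpa only [real_inner_smul_left, hξ, mul_one, inner_zero_left] using congrArg (⟪·, ξ⟫_ℝ) hzero

end AlmostContact

theorem eq_inner_smul_of_inner_eq_zero {V : Type*} [NormedAddCommGroup V]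
    [InnerProductSpace ℝ V] {ξ v : V} (hξ : ⟪ξ, ξ⟫_ℝ = 1)
    (hv : ∀ Y : V, ⟪Y, ξ⟫_ℝ = 0 → ⟪v, Y⟫_ℝ = 0) : v = ⟪v, ξ⟫_ℝ • ξ := by
  set w := v - ⟪v, ξ⟫_ℝ • ξ
  have hw : ⟪w, ξ⟫_ℝ = 0 := by
    rw [inner_sub_left, real_inner_smul_left, hξ, mul_one, sub_self]
  have hww : ⟪w, w⟫_ℝ = 0 := by
    rw [inner_sub_left, hv w hw, real_inner_smul_left, real_inner_comm w ξ, hw, mul_zero,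
      sub_zero]
  exact sub_eq_zero.mp (inner_self_eq_zero.mp hww)

theorem AF_eq_zero_of_apply_eq_zero {V : Type*} [NormedAddCommGroup V] [InnerProductSpace ℝ V]
    {φ A : V →ₗ[ℝ] V} {ξ X : V} (hX : φ (A X) = 0) (Y : V) : AF φ A ξ X Y = 0 := by
  simp [AF, choF, hX]

theorem thm3_converse_general {V : Type*} [NormedAddCommGroup V] [InnerProductSpace ℝ V]
    (φ : V →ₗ[ℝ] V) (ξ : V) (hξ : ‖ξ‖ = 1)
    (hφφ : ∀ X : V, φ (φ X) = -X + ⟪X, ξ⟫_ℝ • ξ)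
    (A : V →ₗ[ℝ] V)
    (hruled : ∀ X Y : V, ⟪X, ξ⟫_ℝ = 0 → ⟪Y, ξ⟫_ℝ = 0 → ⟪A X, Y⟫_ℝ = 0) :
    ∀ X Y : V, ⟪X, ξ⟫_ℝ = 0 → ⟪Y, ξ⟫_ℝ = 0 →
      AF φ A ξ (φ X) Y = φ (AF φ A ξ X Y) := by
  have hξξ : ⟪ξ, ξ⟫_ℝ = 1 := by rw [real_inner_self_eq_norm_sq, hξ, one_pow]
  have hφA : ∀ X : V, ⟪X, ξ⟫_ℝ = 0 → φ (A X) = 0 := fun X hX => by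
    rw [eq_inner_smul_of_inner_eq_zero hξξ (hruled X · hX ·), map_smul,
      almostContact_apply_xi hξξ hφφ, smul_zero]
  intro X Y hX _
  rw [AF_eq_zero_of_apply_eq_zero (hφA X hX),
    AF_eq_zero_of_apply_eq_zero (hφA (φ X) (almostContact_inner_apply_xi hξξ hφφ X)), map_zero]

theorem thm3_converse {V : Type*} [NormedAddCommGroup V] [InnerProductSpace ℝ V]
    [FiniteDimensional ℝ V] (hdim : 5 ≤ Module.finrank ℝ V)
    (φ : V →ₗ[ℝ] V) (ξ : V) (hξ : ‖ξ‖ = 1)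
    (hφφ : ∀ X : V, φ (φ X) = -X + ⟪X, ξ⟫_ℝ • ξ)
    (hφg : ∀ X Y : V, ⟪φ X, φ Y⟫_ℝ = ⟪X, Y⟫_ℝ - ⟪X, ξ⟫_ℝ * ⟪Y, ξ⟫_ℝ)
    (A : V →ₗ[ℝ] V) (hA : ∀ X Y : V, ⟪A X, Y⟫_ℝ = ⟪X, A Y⟫_ℝ)
    (hruled : ∀ X Y : V, ⟪X, ξ⟫_ℝ = 0 → ⟪Y, ξ⟫_ℝ = 0 → ⟪A X, Y⟫_ℝ = 0) :
    ∀ X Y : V, ⟪X, ξ⟫_ℝ = 0 → ⟪Y, ξ⟫_ℝ = 0 →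
      AF φ A ξ (φ X) Y = φ (AF φ A ξ X Y) :=
  thm3_converse_general φ ξ hξ hφφ A hruled
end

section
/- Let V, g, φ, ξ, η, A, D be as in the context, suppose Aξ = αξ for some real number α (the Hopf case) and that A satisfies the Maeda relations for α. If A_F(φX, Y) = φ(A_F(X, Y)) for all X, Y ∈ D, then α ≠ 0 and every unit vector X ∈ D with AX = λX for some λ ∈ ℝ satisfies λ = α or λ = −2/α. (Theorem 3, Hopf case.) -/
/-!
For `X, Y ∈ D` one has `A_F(X, Y) = (g(φAX, AY) − α g(φAX, Y)) ξ` (since `A` preserves `D`), and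
`φξ = 0`; so the hypothesis `A_F(φX, Y) = φ A_F(X, Y)` says exactly that
`g(φAφX, AY) = α g(φAφX, Y)`. For a unit eigenvector `X ∈ D` with `AX = λX`, Maeda's relation
gives `φAφX = −μX` with `μ = (αλ + 2)/(2λ − α)`, hence `μ(λ − α) = 0`, i.e.
`(αλ + 2)(λ − α) = 0`. If `α = 0` this forces `λ = 0`, contradicting `2λ − α ≠ 0`; such an
eigenvector exists because the symmetric map `A` preserves `D = ξ^⊥`, which is nonzero.
-/

open scoped InnerProductSpace

section

variable {V : Type*} [NormedAddCommGroup V] [InnerProductSpace ℝ V] {φ A : V →ₗ[ℝ] V} {ξ : V}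

theorem LinearMap.IsSymmetric.exists_unit_eigenvector_of_mapsTo [FiniteDimensional ℝ V]
    (hA : A.IsSymmetric) {K : Submodule ℝ V} (hAK : ∀ x ∈ K, A x ∈ K) (hK : K ≠ ⊥) :
    ∃ X ∈ K, ‖X‖ = 1 ∧ ∃ l : ℝ, A X = l • X := by
  have : Nontrivial K := Submodule.nontrivial_iff_ne_bot.mpr hK
  obtain ⟨l, hl⟩ : ∃ l : ℝ, Module.End.HasEigenvalue (A.restrict hAK) l :=
    ⟨_, (hA.restrict_invariant hAK).hasEigenvalue_iSup_of_finiteDimensional⟩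
  obtain ⟨x, hx⟩ := hl.exists_hasEigenvector
  have hx0 : (x : V) ≠ 0 := fun h => hx.2 (Subtype.ext h)
  have hAx : A x = l • (x : V) := congrArg Subtype.val hx.apply_eq_smul
  refine ⟨‖(x : V)‖⁻¹ • (x : V), K.smul_mem _ x.2, norm_smul_inv_norm hx0, l, ?_⟩
  rw [map_smul, hAx, smul_comm]

theorem phi_xi_eq_zero (hξ : ‖ξ‖ = 1)
    (hφg : ∀ X Y : V, ⟪φ X, φ Y⟫_ℝ = ⟪X, Y⟫_ℝ - ⟪X, ξ⟫_ℝ * ⟪Y, ξ⟫_ℝ) : φ ξ = 0 := by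
  have hξξ : ⟪ξ, ξ⟫_ℝ = 1 := by rw [real_inner_self_eq_norm_sq, hξ, one_pow]
  rw [← inner_self_eq_zero (𝕜 := ℝ), hφg, hξξ]
  norm_num

theorem LinearMap.IsSymmetric.inner_apply_eq_zero_of_eigenvector (hA : A.IsSymmetric) {α : ℝ}
    (hAξ : A ξ = α • ξ) {Y : V} (hY : ⟪Y, ξ⟫_ℝ = 0) : ⟪A Y, ξ⟫_ℝ = 0 := by
  rw [hA, hAξ, inner_smul_right, hY, mul_zero]

theorem AF_eq_smul_xi {α : ℝ} (hAξ : A ξ = α • ξ) (X : V) {Y : V} (hY : ⟪Y, ξ⟫_ℝ = 0)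
    (hAY : ⟪A Y, ξ⟫_ℝ = 0) :
    AF φ A ξ X Y = (⟪φ (A X), A Y⟫_ℝ - α * ⟪φ (A X), Y⟫_ℝ) • ξ := by
  simp only [AF, choF, hY, hAY, zero_smul, sub_zero, map_smul, hAξ, smul_smul, sub_smul,
    mul_comm α]

theorem inner_phi_A_phi_apply_A (hξ : ξ ≠ 0) (hφξ : φ ξ = 0) (hA : A.IsSymmetric) {α : ℝ}
    (hAξ : A ξ = α • ξ) {X Y : V} (hY : ⟪Y, ξ⟫_ℝ = 0)
    (hphi : AF φ A ξ (φ X) Y = φ (AF φ A ξ X Y)) :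
    ⟪φ (A (φ X)), A Y⟫_ℝ = α * ⟪φ (A (φ X)), Y⟫_ℝ := by
  have hAY := hA.inner_apply_eq_zero_of_eigenvector hAξ hY
  rw [AF_eq_smul_xi hAξ _ hY hAY, AF_eq_smul_xi hAξ _ hY hAY, map_smul, hφξ, smul_zero,
    smul_eq_zero] at hphi
  exact sub_eq_zero.mp (hphi.resolve_right hξ)

theorem LinearMap.IsSymmetric.exists_unit_eigenvector_orthogonal [FiniteDimensional ℝ V]
    (hA : A.IsSymmetric) {α : ℝ} (hAξ : A ξ = α • ξ) (hdim : 1 < Module.finrank ℝ V) :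
    ∃ X : V, ‖X‖ = 1 ∧ ⟪X, ξ⟫_ℝ = 0 ∧ ∃ l : ℝ, A X = l • X := by
  have hspan : Module.finrank ℝ (ℝ ∙ ξ) ≤ 1 :=
    (finrank_span_le_card ({ξ} : Set V)).trans (by simp)
  have hK : (ℝ ∙ ξ)ᗮ ≠ ⊥ := by
    intro hbot
    have := (ℝ ∙ ξ).finrank_add_finrank_orthogonal
    rw [hbot, finrank_bot] at this
    omega
  obtain ⟨X, hXK, hX, hAX⟩ := hA.exists_unit_eigenvector_of_mapsTo
    (fun Y hY => Submodule.mem_orthogonal_singleton_iff_inner_left.mpr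
      (hA.inner_apply_eq_zero_of_eigenvector hAξ
        (Submodule.mem_orthogonal_singleton_iff_inner_left.mp hY))) hK
  exact ⟨X, hX, Submodule.mem_orthogonal_singleton_iff_inner_left.mp hXK, hAX⟩

theorem mul_sub_eq_zero_of_inner_phi_A_phi_apply_A
    (hφφ : ∀ X : V, φ (φ X) = -X + ⟪X, ξ⟫_ℝ • ξ) {X : V} (hX : ‖X‖ = 1) (hXD : ⟪X, ξ⟫_ℝ = 0)
    {l μ α : ℝ} (hAX : A X = l • X) (hAφX : A (φ X) = μ • φ X)
    (hkey : ⟪φ (A (φ X)), A X⟫_ℝ = α * ⟪φ (A (φ X)), X⟫_ℝ) : μ * (l - α) = 0 := by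
  have hXX : ⟪X, X⟫_ℝ = 1 := by rw [real_inner_self_eq_norm_sq, hX, one_pow]
  rw [hAφX, map_smul, hφφ, hXD, zero_smul, add_zero, hAX] at hkey
  simp only [inner_smul_left, inner_smul_right, inner_neg_left, hXX, RCLike.conj_to_real]
    at hkey
  linarith

end

theorem thm3_hopf {V : Type*} [NormedAddCommGroup V] [InnerProductSpace ℝ V]
    [FiniteDimensional ℝ V] (hdim : 5 ≤ Module.finrank ℝ V)
    (φ : V →ₗ[ℝ] V) (ξ : V) (hξ : ‖ξ‖ = 1)
    (hφφ : ∀ X : V, φ (φ X) = -X + ⟪X, ξ⟫_ℝ • ξ)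
    (hφg : ∀ X Y : V, ⟪φ X, φ Y⟫_ℝ = ⟪X, Y⟫_ℝ - ⟪X, ξ⟫_ℝ * ⟪Y, ξ⟫_ℝ)
    (A : V →ₗ[ℝ] V) (hA : ∀ X Y : V, ⟪A X, Y⟫_ℝ = ⟪X, A Y⟫_ℝ)
    (α : ℝ) (hAξ : A ξ = α • ξ)
    (hMaeda : ∀ (X : V) (l : ℝ), ‖X‖ = 1 → ⟪X, ξ⟫_ℝ = 0 → A X = l • X →
      2 * l - α ≠ 0 ∧ A (φ X) = ((α * l + 2) / (2 * l - α)) • φ X)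
    (hphi : ∀ X Y : V, ⟪X, ξ⟫_ℝ = 0 → ⟪Y, ξ⟫_ℝ = 0 →
      AF φ A ξ (φ X) Y = φ (AF φ A ξ X Y)) :
    α ≠ 0 ∧ ∀ (X : V) (l : ℝ), ‖X‖ = 1 → ⟪X, ξ⟫_ℝ = 0 → A X = l • X →
      l = α ∨ l = -2 / α := by
  have hξ0 : ξ ≠ 0 := norm_ne_zero_iff.mp (hξ ▸ one_ne_zero)
  have hφξ := phi_xi_eq_zero hξ hφg
  have hrel : ∀ (X : V) (l : ℝ), ‖X‖ = 1 → ⟪X, ξ⟫_ℝ = 0 → A X = l • X →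
      (α * l + 2) * (l - α) = 0 := by
    intro X l hX hXD hAX
    obtain ⟨hden, hAφX⟩ := hMaeda X l hX hXD hAX
    have h := mul_sub_eq_zero_of_inner_phi_A_phi_apply_A hφφ hX hXD hAX hAφX
      (inner_phi_A_phi_apply_A hξ0 hφξ hA hAξ hXD (hphi X X hXD hXD))
    rw [div_mul_eq_mul_div, div_eq_zero_iff] at h
    exact h.resolve_right hden
  have hα : α ≠ 0 := by
    obtain ⟨X, hX, hXD, l, hAX⟩ :=
      LinearMap.IsSymmetric.exists_unit_eigenvector_orthogonal hA hAξ (by omega)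
    intro hα0
    have hden := (hMaeda X l hX hXD hAX).1
    have h := hrel X l hX hXD hAX
    simp only [hα0, zero_mul, zero_add, sub_zero] at h hden
    exact hden (by linarith)
  refine ⟨hα, fun X l hX hXD hAX => ?_⟩
  rcases mul_eq_zero.mp (hrel X l hX hXD hAX) with h | h
  · right
    field_simp
    linarith
  · exact Or.inl (sub_eq_zero.mp h)
end
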